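/- arXiv:2001.08671 — 4 statements merged into one kernel-verified Lean document; each statement's English description precedes it below -/
import Mathlib

section
/- Let X and Y be locally compact topological spaces with Y Hausdorff, let F : X → Y be continuous with F(x₀) = y₀, and suppose F is open at x₀. Then there exist a compact neighborhood X₀ ⊆ X of x₀ and a compact neighborhood Y₀ ⊆ Y of y₀ such that F maps X₀ onto Y₀ and the restriction F̃ : X₀ → Y₀ of F (with the subspace topologies) is a closed map, a continuous surjection, and a quotient map. -/
/-!
Take any compact neighborhood `X₀` of `x₀` and put `Y₀ = F '' X₀`. Openness of `F` at `x₀`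
makes `Y₀` a neighborhood of `y₀`, and `Y₀` is compact as a continuous image. The restriction
`X₀ → Y₀` is then a continuous surjection from a compact space to a Hausdorff space, hence closed,
and a closed continuous surjection is a quotient map.
-/

open Filter Topology Set Function

noncomputable section

/-- A map `F` is *open at the point* `x₀` if `F x₀` lies in the interior of the image of
every neighborhood of `x₀`. -/
def OpenAtPt {X Y : Type*} [TopologicalSpace X] [TopologicalSpace Y]
    (F : X → Y) (x₀ : X) : Prop :=
  ∀ U ∈ nhds x₀, F x₀ ∈ interior (F '' U)

theorem OpenAtPt.image_mem_nhds {X Y : Type*} [TopologicalSpace X] [TopologicalSpace Y]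
    {F : X → Y} {x₀ : X} (hF : OpenAtPt F x₀) {U : Set X} (hU : U ∈ 𝓝 x₀) :
    F '' U ∈ 𝓝 (F x₀) :=
  mem_interior_iff_mem_nhds.mp (hF U hU)

section CompactRestriction

variable {X Y : Type*} [TopologicalSpace X] [TopologicalSpace Y] [T2Space Y]
  {F : X → Y} {K : Set X}

theorem IsCompact.isClosedMap_restrict_image (hK : IsCompact K) (hF : Continuous F) :
    IsClosedMap ((mapsTo_image F K).restrict F K (F '' K)) :=
  have : CompactSpace K := isCompact_iff_compactSpace.mp hK
  (hF.restrict _).isClosedMap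

theorem IsCompact.isQuotientMap_restrict_image (hK : IsCompact K) (hF : Continuous F) :
    IsQuotientMap ((mapsTo_image F K).restrict F K (F '' K)) :=
  (hK.isClosedMap_restrict_image hF).isQuotientMap (hF.restrict _)
    (surjective_mapsTo_image_restrict F K)

end CompactRestriction

theorem statement2_general {X Y : Type*} [TopologicalSpace X] [TopologicalSpace Y]
    [LocallyCompactSpace X] [T2Space Y]
    (F : X → Y) (x₀ : X) (y₀ : Y) (hFc : Continuous F) (hFx : F x₀ = y₀)
    (hFo : OpenAtPt F x₀) :
    ∃ (X₀ : Set X) (Y₀ : Set Y),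
      IsCompact X₀ ∧ X₀ ∈ nhds x₀ ∧ IsCompact Y₀ ∧ Y₀ ∈ nhds y₀ ∧ F '' X₀ = Y₀ ∧
        ∃ Ft : X₀ → Y₀, (∀ p : X₀, (Ft p : Y) = F (p : X)) ∧
          Continuous Ft ∧ Surjective Ft ∧ IsClosedMap Ft ∧ Topology.IsQuotientMap Ft := by
  subst hFx
  obtain ⟨K, hK, hKx₀⟩ := exists_compact_mem_nhds x₀
  exact ⟨K, F '' K, hK, hKx₀, hK.image hFc, hFo.image_mem_nhds hKx₀, rfl,
    (mapsTo_image F K).restrict F K (F '' K), fun _ ↦ rfl, hFc.restrict _,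
    surjective_mapsTo_image_restrict F K, hK.isClosedMap_restrict_image hFc,
    hK.isQuotientMap_restrict_image hFc⟩

/-- With `X`, `Y` locally compact and `Y` Hausdorff, a continuous map open at
`x₀` restricts to a closed quotient map between compact neighborhoods `X₀` of `x₀` and `Y₀` of
`y₀ = F x₀`. -/
theorem statement2 {X Y : Type*} [TopologicalSpace X] [TopologicalSpace Y]
    [LocallyCompactSpace X] [LocallyCompactSpace Y] [T2Space Y]
    (F : X → Y) (x₀ : X) (y₀ : Y) (hFc : Continuous F) (hFx : F x₀ = y₀)
    (hFo : OpenAtPt F x₀) :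
    ∃ (X₀ : Set X) (Y₀ : Set Y),
      IsCompact X₀ ∧ X₀ ∈ nhds x₀ ∧ IsCompact Y₀ ∧ Y₀ ∈ nhds y₀ ∧ F '' X₀ = Y₀ ∧
        ∃ Ft : X₀ → Y₀, (∀ p : X₀, (Ft p : Y) = F (p : X)) ∧
          Continuous Ft ∧ Surjective Ft ∧ IsClosedMap Ft ∧ Topology.IsQuotientMap Ft :=
  statement2_general F x₀ y₀ hFc hFx hFo
end
end

section
/- If the vector field f is open at (0,0), then the control system ẋ = f(x,u) is locally exponentially stabilizable by a composition operator with a stationary symbol; that is, there exist an open neighborhood 𝒪 ⊆ ℝⁿ of 0 and a (not necessarily continuous) map h : 𝒪 → 𝒳 × 𝒰 with h(0) = (0,0) such that f ∘ h is continuous, the uniqueness criterion holds for f ∘ h, and the origin is a locally exponentially stable equilibrium of ẋ = (f ∘ h)(x). -/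
/-!
Openness of `f` at `(0,0)` puts a ball `B` around `0 = f (0,0)` inside the range of `f`, so a
(discontinuous) right inverse `h` of `f` over `B` can be chosen with `f (h x) = -x`. The closed
loop is then the linear system `ẋ = -x` on `B`, whose solutions are exactly `x t = exp (-t) • x 0`:
`t ↦ exp t • x t` has zero derivative.
-/

open Filter Topology Set Function

noncomputable section

abbrev Vec (n : ℕ) : Type := Fin n → ℝ

/-- `f`, viewed as a map defined on the set `s`, is *open at the point* `x₀ ∈ s`. -/
def OpenOnAt {X Y : Type*} [TopologicalSpace X] [TopologicalSpace Y]
    (f : X → Y) (s : Set X) (x₀ : X) : Prop :=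
  ∀ U ∈ nhdsWithin x₀ s, f x₀ ∈ interior (f '' (U ∩ s))

/-- `x : [0,∞) → ℝⁿ` is a solution of `ẋ = g x` remaining in the domain `𝒪` of `g`. -/
def IsSolOn {n : ℕ} (𝒪 : Set (Vec n)) (g : Vec n → Vec n) (x : ℝ → Vec n) : Prop :=
  ∀ t : ℝ, 0 ≤ t → x t ∈ 𝒪 ∧ HasDerivAt x (g (x t)) t

/-- the uniqueness criterion for `ẋ = g x` (`g` with domain `𝒪`): `g` is continuous and,
for every initial value near the origin, there is exactly one solution on `[0,∞)`. -/
def UniqCrit {n : ℕ} (𝒪 : Set (Vec n)) (g : Vec n → Vec n) : Prop :=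
  ContinuousOn g 𝒪 ∧
    ∃ δ > (0:ℝ), ∀ x₀ : Vec n, ‖x₀‖ < δ →
      ((∃ x : ℝ → Vec n, IsSolOn 𝒪 g x ∧ x 0 = x₀) ∧
        ∀ x y : ℝ → Vec n, IsSolOn 𝒪 g x → IsSolOn 𝒪 g y → x 0 = x₀ → y 0 = x₀ →
          ∀ t : ℝ, 0 ≤ t → x t = y t)

/-- the origin is a locally asymptotically stable equilibrium of `ẋ = g x`. -/
def LocAsympStable {n : ℕ} (𝒪 : Set (Vec n)) (g : Vec n → Vec n) : Prop :=
  (∀ ε > (0:ℝ), ∃ δ > (0:ℝ), ∀ x : ℝ → Vec n, IsSolOn 𝒪 g x → ‖x 0‖ < δ →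
      ∀ t : ℝ, 0 ≤ t → ‖x t‖ < ε) ∧
    ∃ δ₀ > (0:ℝ), ∀ x : ℝ → Vec n, IsSolOn 𝒪 g x → ‖x 0‖ < δ₀ →
      Tendsto x atTop (nhds 0)

/-- the origin is a locally exponentially stable equilibrium of `ẋ = g x`. -/
def LocExpStable {n : ℕ} (𝒪 : Set (Vec n)) (g : Vec n → Vec n) : Prop :=
  ∃ δ > (0:ℝ), ∃ M > (0:ℝ), ∃ lam > (0:ℝ),
    ∀ x : ℝ → Vec n, IsSolOn 𝒪 g x → ‖x 0‖ < δ →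
      ∀ t : ℝ, 0 ≤ t → ‖x t‖ ≤ M * Real.exp (-lam * t) * ‖x 0‖

open Metric Real

theorem OpenOnAt.image_mem_nhds {X Y : Type*} [TopologicalSpace X] [TopologicalSpace Y]
    {f : X → Y} {s : Set X} {x₀ : X} (hf : OpenOnAt f s x₀) : f '' s ∈ 𝓝 (f x₀) := by
  simpa using mem_interior_iff_mem_nhds.1 (hf univ univ_mem)

theorem Set.SurjOn.exists_rightInvOn_apply_eq {α β : Type*} [DecidableEq β] {f : α → β}
    {s : Set α} {t : Set β} (hf : SurjOn f s t) {a : α} (ha : a ∈ s) :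
    ∃ h : β → α, MapsTo h t s ∧ h (f a) = a ∧ RightInvOn h f t := by
  have : Nonempty α := ⟨a⟩
  refine ⟨update (invFunOn f s) (f a) a, fun y hy => ?_, update_self .., fun y hy => ?_⟩
  · rcases eq_or_ne y (f a) with rfl | hne
    · simpa using ha
    · simpa [hne] using hf.mapsTo_invFunOn hy
  · rcases eq_or_ne y (f a) with rfl | hne
    · simp
    · simpa [hne] using hf.rightInvOn_invFunOn hy

section NegativeFeedback

variable {n : ℕ} {𝒪 : Set (Vec n)} {g : Vec n → Vec n}

theorem IsSolOn.eq_exp_neg_smul (hg : EqOn g Neg.neg 𝒪) {x : ℝ → Vec n} (hx : IsSolOn 𝒪 g x)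
    {t : ℝ} (ht : 0 ≤ t) : x t = exp (-t) • x 0 := by
  have hderiv : ∀ s ∈ Ici (0 : ℝ), HasDerivAt (fun s => exp s • x s) 0 s := fun s hs => by
    obtain ⟨hmem, hder⟩ := hx s hs
    rw [hg hmem] at hder
    have hprod := (hasDerivAt_exp s).smul hder
    rwa [smul_neg, neg_add_cancel] at hprod
  have hconst : exp t • x t = x 0 := by
    simpa using constant_of_has_deriv_right_zero
      (fun s hs => (hderiv s hs.1).continuousAt.continuousWithinAt)
      (fun s hs => (hderiv s hs.1).hasDerivWithinAt) t ⟨ht, le_rfl⟩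
  rw [← hconst, smul_smul, ← exp_add, neg_add_cancel, exp_zero, one_smul]

theorem isSolOn_exp_neg_smul {ε : ℝ} (hg : EqOn g Neg.neg (ball 0 ε)) {x₀ : Vec n}
    (hx₀ : ‖x₀‖ < ε) : IsSolOn (ball 0 ε) g fun t => exp (-t) • x₀ := by
  intro t ht
  have hmem : exp (-t) • x₀ ∈ ball (0 : Vec n) ε := by
    rw [mem_ball_zero_iff, norm_smul, norm_of_nonneg (exp_pos _).le]
    calc exp (-t) * ‖x₀‖ ≤ 1 * ‖x₀‖ := by gcongr; exact exp_le_one_iff.2 (by linarith)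
      _ < ε := by rwa [one_mul]
  refine ⟨hmem, ?_⟩
  rw [hg hmem]
  simpa using ((hasDerivAt_neg t).exp).smul_const x₀

theorem uniqCrit_ball_of_eqOn_neg {ε : ℝ} (hε : 0 < ε) (hg : EqOn g Neg.neg (ball 0 ε)) :
    UniqCrit (ball 0 ε) g :=
  ⟨continuousOn_neg.congr hg, ε, hε, fun x₀ hx₀ =>
    ⟨⟨_, isSolOn_exp_neg_smul hg hx₀, by simp⟩, fun x y hx hy hx0 hy0 t ht => by
      rw [hx.eq_exp_neg_smul hg ht, hy.eq_exp_neg_smul hg ht, hx0, hy0]⟩⟩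

theorem locExpStable_of_eqOn_neg (hg : EqOn g Neg.neg 𝒪) : LocExpStable 𝒪 g :=
  ⟨1, one_pos, 1, one_pos, 1, one_pos, fun x hx _ t ht => by
    rw [hx.eq_exp_neg_smul hg ht, norm_smul, norm_of_nonneg (exp_pos _).le, one_mul,
      neg_one_mul]⟩

end NegativeFeedback

theorem statement4_general
    {n m : ℕ}
    (𝒳 : Set (Vec n)) (𝒰 : Set (Vec m))
    (hXU0 : ((0 : Vec n), (0 : Vec m)) ∈ 𝒳 ×ˢ 𝒰)
    (f : Vec n × Vec m → Vec n)
    (hf0 : f (0, 0) = 0)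
    (hopen : OpenOnAt f (𝒳 ×ˢ 𝒰) (0, 0)) :
    ∃ 𝒪 : Set (Vec n), IsOpen 𝒪 ∧ (0 : Vec n) ∈ 𝒪 ∧
      ∃ h : Vec n → Vec n × Vec m, MapsTo h 𝒪 (𝒳 ×ˢ 𝒰) ∧ h 0 = (0, 0) ∧
        ContinuousOn (f ∘ h) 𝒪 ∧ UniqCrit 𝒪 (f ∘ h) ∧ LocExpStable 𝒪 (f ∘ h) := by
  classical
  obtain ⟨ε, hε, hball⟩ := Metric.mem_nhds_iff.1 (hf0 ▸ hopen.image_mem_nhds)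
  obtain ⟨h, hmaps, h0, hinv⟩ := SurjOn.exists_rightInvOn_apply_eq hball hXU0
  have hneg : EqOn (f ∘ fun x => h (-x)) Neg.neg (ball 0 ε) := fun x hx =>
    hinv (by simpa using hx)
  refine ⟨ball 0 ε, isOpen_ball, mem_ball_self hε, fun x => h (-x),
    fun x hx => hmaps (by simpa using hx), by simpa [hf0] using h0,
    continuousOn_neg.congr hneg, uniqCrit_ball_of_eqOn_neg hε hneg, locExpStable_of_eqOn_neg hneg⟩

/-- If `f` is open at `(0,0)`, then `ẋ = f (x,u)` is locally exponentially
stabilizable by a composition operator with a (possibly discontinuous) stationary symbol. -/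
theorem statement4
    {n m : ℕ} (hn : 1 ≤ n) (hm : 1 ≤ m)
    (𝒳 : Set (Vec n)) (𝒰 : Set (Vec m))
    (hXUopen : IsOpen (𝒳 ×ˢ 𝒰)) (hXU0 : ((0 : Vec n), (0 : Vec m)) ∈ 𝒳 ×ˢ 𝒰)
    (f : Vec n × Vec m → Vec n)
    (hfc : ContinuousOn f (𝒳 ×ˢ 𝒰)) (hf0 : f (0, 0) = 0)
    (hopen : OpenOnAt f (𝒳 ×ˢ 𝒰) (0, 0)) :
    ∃ 𝒪 : Set (Vec n), IsOpen 𝒪 ∧ (0 : Vec n) ∈ 𝒪 ∧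
      ∃ h : Vec n → Vec n × Vec m, MapsTo h 𝒪 (𝒳 ×ˢ 𝒰) ∧ h 0 = (0, 0) ∧
        ContinuousOn (f ∘ h) 𝒪 ∧ UniqCrit 𝒪 (f ∘ h) ∧ LocExpStable 𝒪 (f ∘ h) :=
  statement4_general 𝒳 𝒰 hXU0 f hf0 hopen
end
end

section
/- Let k ≥ 0. The control system ẋ = f(x,u) is locally asymptotically (respectively, exponentially) stabilizable by a Cᵏ stationary feedback law if and only if there exist an open neighborhood 𝒪 ⊆ ℝⁿ of 0 and a Cᵏ map h : 𝒪 → 𝒳 × 𝒰 with h(0) = (0,0) such that: f ∘ h is continuous and the uniqueness criterion holds for the system below; the map h₁ := proj₁ ∘ h, restricted to some open neighborhood of 0, is a C¹ diffeomorphism onto an open subset of ℝⁿ; and the origin is a locally asymptotically (respectively, exponentially) stable equilibrium of ẋ = (J_{h₁}(x))⁻¹ · (f ∘ h)(x), where J_{h₁}(x) denotes the Jacobian matrix of h₁ at x. Moreover, every Cᵏ stationary feedback law u that locally asymptotically (respectively, exponentially) stabilizes the system equals proj₂ ∘ h ∘ h₁⁻¹ for some such h. -/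
/-!
A feedback law `u` gives the symbol `h x = (x, u x)`, for which `h₁ = id` and the two closed-loop
systems coincide. Conversely, if `h₁` maps `N` diffeomorphically onto `V` with inverse `φ`, the law
`u = proj₂ ∘ h ∘ φ` has closed loop `ẏ = (f ∘ h) (φ y)` on `V`, and by the chain rule `h₁` and `φ`
exchange its solutions with those of `ẋ = (J_{h₁} x)⁻¹ (f ∘ h) x` on `N`. Both maps fix the origin
and are differentiable there, hence `O(‖·‖)` at `0`, which is enough to carry uniqueness and
asymptotic or exponential stability from one system to the other.
-/

open Filter Topology Set Function

noncomputable section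

/-- `ẋ = f (x,u)` is locally stabilizable (in the sense of `Stab`) by a `Cᵏ` stationary
feedback law. -/
def FeedbackStab {n m : ℕ} (𝒳 : Set (Vec n)) (𝒰 : Set (Vec m))
    (f : Vec n × Vec m → Vec n) (k : ℕ)
    (Stab : Set (Vec n) → (Vec n → Vec n) → Prop) : Prop :=
  ∃ 𝒪' : Set (Vec n), IsOpen 𝒪' ∧ (0 : Vec n) ∈ 𝒪' ∧ 𝒪' ⊆ 𝒳 ∧
    ∃ u : Vec n → Vec m, MapsTo u 𝒪' 𝒰 ∧ ContDiffOn ℝ k u 𝒪' ∧ u 0 = 0 ∧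
      ContinuousOn (fun x => f (x, u x)) 𝒪' ∧ UniqCrit 𝒪' (fun x => f (x, u x)) ∧
      Stab 𝒪' (fun x => f (x, u x))

/-- There is a `Cᵏ` stationary symbol `h` on an open neighborhood `𝒪` of `0` with `f ∘ h`
continuous, such that `h₁ := proj₁ ∘ h` restricted to some open neighborhood `N` of `0` is a
`C¹` diffeomorphism (with inverse `φ`) onto an open subset, the uniqueness criterion holds for
the system `ẋ = (J_{h₁} x)⁻¹ • (f ∘ h) x`, the origin is a `Stab`-stable equilibrium of it,
and `h`, `φ` satisfy the extra requirement `P h φ (h₁ '' N)`. -/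
def GoodSymbol {n m : ℕ} (𝒳 : Set (Vec n)) (𝒰 : Set (Vec m))
    (f : Vec n × Vec m → Vec n) (k : ℕ)
    (Stab : Set (Vec n) → (Vec n → Vec n) → Prop)
    (P : (Vec n → Vec n × Vec m) → (Vec n → Vec n) → Set (Vec n) → Prop) : Prop :=
  ∃ 𝒪 : Set (Vec n), IsOpen 𝒪 ∧ (0 : Vec n) ∈ 𝒪 ∧
    ∃ h : Vec n → Vec n × Vec m, MapsTo h 𝒪 (𝒳 ×ˢ 𝒰) ∧ ContDiffOn ℝ k h 𝒪 ∧
      h 0 = (0, 0) ∧ ContinuousOn (f ∘ h) 𝒪 ∧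
      ∃ N : Set (Vec n), IsOpen N ∧ (0 : Vec n) ∈ N ∧ N ⊆ 𝒪 ∧
        IsOpen ((fun x => (h x).1) '' N) ∧
        ContDiffOn ℝ 1 (fun x => (h x).1) N ∧
        ∃ φ : Vec n → Vec n,
          ContDiffOn ℝ 1 φ ((fun x => (h x).1) '' N) ∧
          (∀ x ∈ N, φ ((h x).1) = x) ∧
          (∀ y ∈ (fun x => (h x).1) '' N, (h (φ y)).1 = y) ∧
          UniqCrit N
            (fun x => (fderivWithin ℝ (fun z => (h z).1) N x).inverse ((f ∘ h) x)) ∧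
          Stab N
            (fun x => (fderivWithin ℝ (fun z => (h z).1) N x).inverse ((f ∘ h) x)) ∧
          P h φ ((fun x => (h x).1) '' N)

open Asymptotics

section Diffeo

variable {E F : Type*} [NormedAddCommGroup E] [NormedSpace ℝ E]
  [NormedAddCommGroup F] [NormedSpace ℝ F]

structure IsC1DiffeoOn (ψ : E → F) (χ : F → E) (s : Set E) : Prop where
  isOpen : IsOpen s
  isOpen_image : IsOpen (ψ '' s)
  contDiffOn : ContDiffOn ℝ 1 ψ s
  contDiffOn_inv : ContDiffOn ℝ 1 χ (ψ '' s)
  leftInvOn : LeftInvOn χ ψ s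

namespace IsC1DiffeoOn

variable {ψ : E → F} {χ : F → E} {s : Set E}

theorem mapsTo_inv (hd : IsC1DiffeoOn ψ χ s) : MapsTo χ (ψ '' s) s := by
  rintro _ ⟨x, hx, rfl⟩
  rwa [hd.leftInvOn hx]

theorem differentiableAt (hd : IsC1DiffeoOn ψ χ s) {x : E} (hx : x ∈ s) :
    DifferentiableAt ℝ ψ x :=
  (hd.contDiffOn.contDiffAt (hd.isOpen.mem_nhds hx)).differentiableAt one_ne_zero

theorem differentiableAt_inv (hd : IsC1DiffeoOn ψ χ s) {y : F} (hy : y ∈ ψ '' s) :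
    DifferentiableAt ℝ χ y :=
  (hd.contDiffOn_inv.contDiffAt (hd.isOpen_image.mem_nhds hy)).differentiableAt one_ne_zero

theorem exists_hasFDerivAt_equiv (hd : IsC1DiffeoOn ψ χ s) {x : E} (hx : x ∈ s) :
    ∃ e : E ≃L[ℝ] F, HasFDerivAt ψ (e : E →L[ℝ] F) x ∧
      HasFDerivAt χ (e.symm : F →L[ℝ] E) (ψ x) := by
  have hψx := hd.differentiableAt hx
  have hχψx := hd.differentiableAt_inv (mem_image_of_mem ψ hx)
  have hleft : fderiv ℝ χ (ψ x) ∘L fderiv ℝ ψ x = ContinuousLinearMap.id ℝ E := by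
    have hid : χ ∘ ψ =ᶠ[𝓝 x] id :=
      eventually_of_mem (hd.isOpen.mem_nhds hx) fun z hz => hd.leftInvOn hz
    rw [← fderiv_comp x hχψx hψx, hid.fderiv_eq, fderiv_id]
  have hright : fderiv ℝ ψ x ∘L fderiv ℝ χ (ψ x) = ContinuousLinearMap.id ℝ F := by
    have hid : ψ ∘ χ =ᶠ[𝓝 (ψ x)] id :=
      eventually_of_mem (hd.isOpen_image.mem_nhds (mem_image_of_mem ψ hx))
        fun y hy => hd.leftInvOn.rightInvOn_image hy
    have hψx' : DifferentiableAt ℝ ψ (χ (ψ x)) := by rwa [hd.leftInvOn hx]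
    have hcomp := fderiv_comp (ψ x) hψx' hχψx
    rw [hid.fderiv_eq, fderiv_id, hd.leftInvOn hx] at hcomp
    exact hcomp.symm
  refine ⟨.equivOfInverse _ _ (fun v => congr($hleft v)) (fun w => congr($hright w)),
    hψx.hasFDerivAt, hχψx.hasFDerivAt⟩

def toOpenPartialHomeomorph (hd : IsC1DiffeoOn ψ χ s) : OpenPartialHomeomorph E F where
  toFun := ψ
  invFun := χ
  source := s
  target := ψ '' s
  map_source' := mapsTo_image ψ s
  map_target' := hd.mapsTo_inv
  left_inv' := hd.leftInvOn
  right_inv' := hd.leftInvOn.rightInvOn_image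
  open_source := hd.isOpen
  open_target := hd.isOpen_image
  continuousOn_toFun := hd.contDiffOn.continuousOn
  continuousOn_invFun := hd.contDiffOn_inv.continuousOn

theorem contDiffOn_inv_of_contDiffOn [CompleteSpace E] (hd : IsC1DiffeoOn ψ χ s) {k : ℕ}
    (hψ : ContDiffOn ℝ k ψ s) : ContDiffOn ℝ k χ (ψ '' s) := by
  intro y hy
  obtain ⟨e, he, -⟩ := hd.exists_hasFDerivAt_equiv (hd.mapsTo_inv hy)
  have hψk : ContDiffAt ℝ k ψ (χ y) := hψ.contDiffAt (hd.isOpen.mem_nhds (hd.mapsTo_inv hy))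
  exact (hd.toOpenPartialHomeomorph.contDiffAt_symm hy he hψk).contDiffWithinAt

end IsC1DiffeoOn

end Diffeo

section Systems

variable {n : ℕ} {s t : Set (Vec n)} {g G χ ψ : Vec n → Vec n}

theorem IsSolOn.congr {x : ℝ → Vec n} (hx : IsSolOn s g x) (hgG : EqOn g G s) :
    IsSolOn s G x := fun τ hτ =>
  ⟨(hx τ hτ).1, hgG (hx τ hτ).1 ▸ (hx τ hτ).2⟩

theorem IsSolOn.comp {ψ' : Vec n → Vec n →L[ℝ] Vec n} {x : ℝ → Vec n} (hx : IsSolOn s g x)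
    (hmaps : MapsTo ψ s t) (hψ : ∀ z ∈ s, HasFDerivAt ψ (ψ' z) z)
    (hgG : ∀ z ∈ s, ψ' z (g z) = G (ψ z)) : IsSolOn t G (ψ ∘ x) := fun τ hτ => by
  obtain ⟨hmem, hderiv⟩ := hx τ hτ
  exact ⟨hmaps hmem, hgG _ hmem ▸ (hψ _ hmem).comp_hasDerivAt τ hderiv⟩

namespace IsC1DiffeoOn

variable (F : Vec n → Vec n)

theorem isSolOn_comp (hd : IsC1DiffeoOn ψ χ s) {x : ℝ → Vec n}
    (hx : IsSolOn s (fun z => (fderivWithin ℝ ψ s z).inverse (F z)) x) :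
    IsSolOn (ψ '' s) (F ∘ χ) (ψ ∘ x) := by
  refine hx.comp (mapsTo_image ψ s) (fun z hz => (hd.differentiableAt hz).hasFDerivAt)
    fun z hz => ?_
  obtain ⟨e, he, -⟩ := hd.exists_hasFDerivAt_equiv hz
  rw [fderivWithin_of_isOpen hd.isOpen hz, he.fderiv, ContinuousLinearMap.inverse_equiv]
  simp [hd.leftInvOn hz]

theorem isSolOn_inv_comp (hd : IsC1DiffeoOn ψ χ s) {y : ℝ → Vec n}
    (hy : IsSolOn (ψ '' s) (F ∘ χ) y) :
    IsSolOn s (fun z => (fderivWithin ℝ ψ s z).inverse (F z)) (χ ∘ y) := by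
  refine hy.comp hd.mapsTo_inv (fun y hy => (hd.differentiableAt_inv hy).hasFDerivAt) ?_
  rintro _ ⟨z, hz, rfl⟩
  obtain ⟨e, he, he'⟩ := hd.exists_hasFDerivAt_equiv hz
  rw [comp_apply, hd.leftInvOn hz, fderivWithin_of_isOpen hd.isOpen hz, he.fderiv, he'.fderiv,
    ContinuousLinearMap.inverse_equiv]

end IsC1DiffeoOn

/-- `ẏ = G y` on `t` reduces to `ẋ = g x` on `s`; the `O(‖·‖)` bounds at `0` force
`χ 0 = 0 = ψ 0`. -/
structure IsReduction (s t : Set (Vec n)) (g G χ ψ : Vec n → Vec n) : Prop where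
  isSolOn_comp : ∀ y, IsSolOn t G y → IsSolOn s g (χ ∘ y)
  leftInvOn : LeftInvOn ψ χ t
  isBigO : χ =O[𝓝 0] fun z => z
  isBigO_inv : ψ =O[𝓝 0] fun z => z

theorem IsReduction.refl (s : Set (Vec n)) (g : Vec n → Vec n) :
    IsReduction s s g g (fun z => z) fun z => z :=
  ⟨fun _ hy => hy, fun _ _ => rfl, isBigO_refl _ _, isBigO_refl _ _⟩

theorem IsC1DiffeoOn.isReduction (hd : IsC1DiffeoOn ψ χ s) (h0 : 0 ∈ s) (hψ0 : ψ 0 = 0)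
    (F : Vec n → Vec n) :
    IsReduction s (ψ '' s) (fun z => (fderivWithin ℝ ψ s z).inverse (F z)) (F ∘ χ) χ ψ := by
  have hχ0 : χ 0 = 0 := by simpa [hψ0] using hd.leftInvOn h0
  have h0_image : (0 : Vec n) ∈ ψ '' s := ⟨0, h0, hψ0⟩
  exact ⟨fun _ => hd.isSolOn_inv_comp F, hd.leftInvOn.rightInvOn_image,
    by simpa [hχ0] using (hd.differentiableAt_inv h0_image).isBigO_sub,
    by simpa [hψ0] using (hd.differentiableAt h0).isBigO_sub⟩

namespace IsReduction

theorem congr (hr : IsReduction s t g G χ ψ) {G' : Vec n → Vec n} (hG : EqOn G G' t) :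
    IsReduction s t g G' χ ψ :=
  { hr with isSolOn_comp := fun y hy => hr.isSolOn_comp y (hy.congr hG.symm) }

theorem eventually_norm_lt (hr : IsReduction s t g G χ ψ) {δ : ℝ} (hδ : 0 < δ) :
    ∀ᶠ z in 𝓝 0, ‖χ z‖ < δ :=
  (hr.isBigO.trans_tendsto tendsto_id).eventually
    (NormedAddGroup.nhds_zero_basis_norm_lt.mem_of_mem hδ)

theorem eventually_norm_inv_lt (hr : IsReduction s t g G χ ψ) {δ : ℝ} (hδ : 0 < δ) :
    ∀ᶠ z in 𝓝 0, ‖ψ z‖ < δ :=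
  (hr.isBigO_inv.trans_tendsto tendsto_id).eventually
    (NormedAddGroup.nhds_zero_basis_norm_lt.mem_of_mem hδ)

theorem uniqCrit (hr : IsReduction s t g G χ ψ)
    (hback : ∀ x, IsSolOn s g x → IsSolOn t G (ψ ∘ x)) (hG : ContinuousOn G t)
    (ht : t ∈ 𝓝 0) (hg : UniqCrit s g) : UniqCrit t G := by
  obtain ⟨-, δ, hδ, hsol⟩ := hg
  obtain ⟨δ', hδ', hsmall⟩ := NormedAddGroup.nhds_zero_basis_norm_lt.eventually_iff.1
    ((hr.eventually_norm_lt hδ).and ht)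
  refine ⟨hG, δ', hδ', fun y₀ hy₀ => ?_⟩
  obtain ⟨hχy₀, hy₀t⟩ := hsmall hy₀
  obtain ⟨⟨x, hx, hx0⟩, huniq⟩ := hsol (χ y₀) hχy₀
  refine ⟨⟨ψ ∘ x, hback x hx, by simp [hx0, hr.leftInvOn hy₀t]⟩,
    fun y₁ y₂ h₁ h₂ h₁0 h₂0 τ hτ => ?_⟩
  have hχ := huniq _ _ (hr.isSolOn_comp y₁ h₁) (hr.isSolOn_comp y₂ h₂) (by simp [h₁0])
    (by simp [h₂0]) τ hτ
  rw [← hr.leftInvOn (h₁ τ hτ).1, ← hr.leftInvOn (h₂ τ hτ).1]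
  exact congrArg ψ hχ

theorem locAsympStable (hr : IsReduction s t g G χ ψ) (hg : LocAsympStable s g) :
    LocAsympStable t G := by
  obtain ⟨hstable, δ₀, hδ₀, hattr⟩ := hg
  have hrecover : ∀ y, IsSolOn t G y → ∀ τ, 0 ≤ τ → ψ (χ (y τ)) = y τ :=
    fun y hy τ hτ => hr.leftInvOn (hy τ hτ).1
  constructor
  · intro ε hε
    obtain ⟨ε₁, hε₁, hψ⟩ :=
      NormedAddGroup.nhds_zero_basis_norm_lt.eventually_iff.1 (hr.eventually_norm_inv_lt hε)
    obtain ⟨δ₁, hδ₁, hx⟩ := hstable ε₁ hε₁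
    obtain ⟨δ, hδ, hχ⟩ :=
      NormedAddGroup.nhds_zero_basis_norm_lt.eventually_iff.1 (hr.eventually_norm_lt hδ₁)
    refine ⟨δ, hδ, fun y hy hy0 τ hτ => ?_⟩
    rw [← hrecover y hy τ hτ]
    exact hψ (hx _ (hr.isSolOn_comp y hy) (hχ hy0) τ hτ)
  · obtain ⟨δ, hδ, hχ⟩ :=
      NormedAddGroup.nhds_zero_basis_norm_lt.eventually_iff.1 (hr.eventually_norm_lt hδ₀)
    refine ⟨δ, hδ, fun y hy hy0 => ?_⟩
    refine (((hr.isBigO_inv.trans_tendsto tendsto_id).comp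
      (hattr _ (hr.isSolOn_comp y hy) (hχ hy0))).congr' ?_)
    filter_upwards [eventually_ge_atTop 0] with τ hτ using hrecover y hy τ hτ

theorem locExpStable (hr : IsReduction s t g G χ ψ) (hg : LocExpStable s g) :
    LocExpStable t G := by
  obtain ⟨δ, hδ, M, hM, lam, hlam, hdecay⟩ := hg
  obtain ⟨Cχ, hCχ, hχ⟩ := hr.isBigO.exists_pos
  obtain ⟨Cψ, hCψ, hψ⟩ := hr.isBigO_inv.exists_pos
  obtain ⟨rψ, hrψ, hψr⟩ := NormedAddGroup.nhds_zero_basis_norm_lt.eventually_iff.1 hψ.bound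
  obtain ⟨rχ, hrχ, hχr⟩ := NormedAddGroup.nhds_zero_basis_norm_lt.eventually_iff.1
    (hχ.bound.and (hr.eventually_norm_lt (lt_min hδ (div_pos hrψ hM))))
  refine ⟨rχ, hrχ, Cψ * M * Cχ, by positivity, lam, hlam, fun y hy hy0 τ hτ => ?_⟩
  obtain ⟨hy0χ, hx0⟩ := hχr hy0
  have hx := hdecay _ (hr.isSolOn_comp y hy) (hx0.trans_le (min_le_left _ _)) τ hτ
  have hdecay_le_one : Real.exp (-lam * τ) ≤ 1 := Real.exp_le_one_iff.2 (by nlinarith)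
  have hxτ : ‖χ (y τ)‖ < rψ := calc
    ‖χ (y τ)‖ ≤ M * Real.exp (-lam * τ) * ‖χ (y 0)‖ := hx
    _ ≤ M * ‖χ (y 0)‖ := by gcongr; exact mul_le_of_le_one_right hM.le hdecay_le_one
    _ < M * (rψ / M) := by gcongr; exact hx0.trans_le (min_le_right _ _)
    _ = rψ := mul_div_cancel₀ _ hM.ne'
  calc ‖y τ‖ = ‖ψ (χ (y τ))‖ := by rw [hr.leftInvOn (hy τ hτ).1]
    _ ≤ Cψ * ‖χ (y τ)‖ := hψr hxτ
    _ ≤ Cψ * (M * Real.exp (-lam * τ) * ‖χ (y 0)‖) := by gcongr; exact hx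
    _ ≤ Cψ * (M * Real.exp (-lam * τ) * (Cχ * ‖y 0‖)) := by gcongr
    _ = Cψ * M * Cχ * Real.exp (-lam * τ) * ‖y 0‖ := by ring

end IsReduction

def StabTransfer (Stab : Set (Vec n) → (Vec n → Vec n) → Prop) : Prop :=
  ∀ ⦃s t : Set (Vec n)⦄ ⦃g G χ ψ : Vec n → Vec n⦄, IsReduction s t g G χ ψ → Stab s g → Stab t G

end Systems

section Feedback

variable {n m : ℕ} {𝒳 : Set (Vec n)} {𝒰 : Set (Vec m)} {f : Vec n × Vec m → Vec n} {k : ℕ}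
  {Stab : Set (Vec n) → (Vec n → Vec n) → Prop}

theorem GoodSymbol.mono {P Q : (Vec n → Vec n × Vec m) → (Vec n → Vec n) → Set (Vec n) → Prop}
    (hPQ : ∀ h φ V, P h φ V → Q h φ V) (H : GoodSymbol 𝒳 𝒰 f k Stab P) :
    GoodSymbol 𝒳 𝒰 f k Stab Q := by
  obtain ⟨𝒪, hO, h0, h, hmaps, hh, hh0, hfh, N, hN, h0N, hNO, hV, hh₁, φ, hφ, hleft, hright,
    huniq, hstab, hP⟩ := H
  exact ⟨𝒪, hO, h0, h, hmaps, hh, hh0, hfh, N, hN, h0N, hNO, hV, hh₁, φ, hφ, hleft, hright,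
    huniq, hstab, hPQ _ _ _ hP⟩

theorem goodSymbol_of_feedbackLaw (hStab : StabTransfer Stab) {𝒪' : Set (Vec n)}
    {u : Vec n → Vec m} (hO : IsOpen 𝒪') (h0 : 0 ∈ 𝒪') (hsub : 𝒪' ⊆ 𝒳) (hmaps : MapsTo u 𝒪' 𝒰)
    (hu : ContDiffOn ℝ k u 𝒪') (hu0 : u 0 = 0) (hcont : ContinuousOn (fun x => f (x, u x)) 𝒪')
    (huniq : UniqCrit 𝒪' fun x => f (x, u x)) (hstab : Stab 𝒪' fun x => f (x, u x)) :
    GoodSymbol 𝒳 𝒰 f k Stab fun h φ V => ∀ x ∈ 𝒪' ∩ V, u x = (h (φ x)).2 := by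
  have hJ : EqOn (fun x => f (x, u x))
      (fun x => (fderivWithin ℝ (fun z => z) 𝒪' x).inverse (f (x, u x))) 𝒪' := fun x hx => by
    dsimp only
    rw [fderivWithin_of_isOpen hO hx, fderiv_fun_id, ContinuousLinearMap.inverse_id]
    rfl
  have hr := (IsReduction.refl 𝒪' fun x => f (x, u x)).congr hJ
  refine ⟨𝒪', hO, h0, fun x => (x, u x), fun x hx => mk_mem_prod (hsub hx) (hmaps hx),
    contDiffOn_id.prodMk hu, by simp [hu0], hcont, 𝒪', hO, h0, subset_rfl, by simpa using hO,
    contDiffOn_id, id, contDiffOn_id, fun _ _ => rfl, fun _ _ => rfl,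
    ?_, hStab hr hstab, fun _ _ => rfl⟩
  exact hr.uniqCrit (fun x hx => hx.congr hJ) (hcont.congr hJ.symm) (hO.mem_nhds h0) huniq

theorem feedbackStab_of_goodSymbol (hStab : StabTransfer Stab)
    {P : (Vec n → Vec n × Vec m) → (Vec n → Vec n) → Set (Vec n) → Prop}
    (H : GoodSymbol 𝒳 𝒰 f k Stab P) : FeedbackStab 𝒳 𝒰 f k Stab := by
  obtain ⟨𝒪, -, -, h, hmaps, hh, hh0, hfh, N, hN, h0N, hNO, hV, hh₁, φ, hφ, hleft, -,
    huniq, hstab, -⟩ := H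
  have hd : IsC1DiffeoOn (fun x => (h x).1) φ N := ⟨hN, hV, hh₁, hφ, hleft⟩
  have hφN : MapsTo φ ((fun x => (h x).1) '' N) 𝒪 := hd.mapsTo_inv.mono_right hNO
  have hφ0 : φ 0 = 0 := by simpa [hh0] using hleft 0 h0N
  have hloop : EqOn ((f ∘ h) ∘ φ) (fun y => f (y, (h (φ y)).2)) ((fun x => (h x).1) '' N) :=
    fun y hy => congrArg f (Prod.ext (hd.leftInvOn.rightInvOn_image hy) rfl)
  have h0V : (0 : Vec n) ∈ (fun x => (h x).1) '' N := ⟨0, h0N, by simp [hh0]⟩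
  have hr := (hd.isReduction h0N (by simp [hh0]) (f ∘ h)).congr hloop
  have hcont : ContinuousOn (fun y => f (y, (h (φ y)).2)) ((fun x => (h x).1) '' N) :=
    (hfh.comp hφ.continuousOn hφN).congr hloop.symm
  have hh₁k : ContDiffOn ℝ k (fun x => (h x).1) N := (contDiff_fst.comp_contDiffOn hh).mono hNO
  refine ⟨_, hV, h0V, ?_, fun y => (h (φ y)).2,
    fun y hy => (hmaps (hφN hy)).2,
    contDiff_snd.comp_contDiffOn (hh.comp (hd.contDiffOn_inv_of_contDiffOn hh₁k) hφN),
    by simp [hφ0, hh0], hcont,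
    hr.uniqCrit (fun x hx => (hd.isSolOn_comp _ hx).congr hloop) hcont (hV.mem_nhds h0V) huniq,
    hStab hr hstab⟩
  rintro _ ⟨x, hx, rfl⟩
  exact (hmaps (hNO hx)).1

end Feedback

theorem statement14_general
    {n m : ℕ}
    (𝒳 : Set (Vec n)) (𝒰 : Set (Vec m))
    (f : Vec n × Vec m → Vec n)
    (k : ℕ) :
    (FeedbackStab 𝒳 𝒰 f k LocAsympStable ↔
      GoodSymbol 𝒳 𝒰 f k LocAsympStable fun _ _ _ => True) ∧
    (FeedbackStab 𝒳 𝒰 f k LocExpStable ↔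
      GoodSymbol 𝒳 𝒰 f k LocExpStable fun _ _ _ => True) ∧
    (∀ (𝒪' : Set (Vec n)) (u : Vec n → Vec m),
      IsOpen 𝒪' → (0 : Vec n) ∈ 𝒪' → 𝒪' ⊆ 𝒳 → MapsTo u 𝒪' 𝒰 →
      ContDiffOn ℝ k u 𝒪' → u 0 = 0 →
      ContinuousOn (fun x => f (x, u x)) 𝒪' → UniqCrit 𝒪' (fun x => f (x, u x)) →
      LocAsympStable 𝒪' (fun x => f (x, u x)) →
      GoodSymbol 𝒳 𝒰 f k LocAsympStable fun h φ V =>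
        ∀ x ∈ 𝒪' ∩ V, u x = (h (φ x)).2) ∧
    (∀ (𝒪' : Set (Vec n)) (u : Vec n → Vec m),
      IsOpen 𝒪' → (0 : Vec n) ∈ 𝒪' → 𝒪' ⊆ 𝒳 → MapsTo u 𝒪' 𝒰 →
      ContDiffOn ℝ k u 𝒪' → u 0 = 0 →
      ContinuousOn (fun x => f (x, u x)) 𝒪' → UniqCrit 𝒪' (fun x => f (x, u x)) →
      LocExpStable 𝒪' (fun x => f (x, u x)) →
      GoodSymbol 𝒳 𝒰 f k LocExpStable fun h φ V =>
        ∀ x ∈ 𝒪' ∩ V, u x = (h (φ x)).2) := by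
  have hAsymp : StabTransfer (n := n) LocAsympStable := fun _ _ _ _ _ _ =>
    IsReduction.locAsympStable
  have hExp : StabTransfer (n := n) LocExpStable := fun _ _ _ _ _ _ => IsReduction.locExpStable
  refine ⟨⟨?_, feedbackStab_of_goodSymbol hAsymp⟩, ⟨?_, feedbackStab_of_goodSymbol hExp⟩,
    fun _ _ => goodSymbol_of_feedbackLaw hAsymp, fun _ _ => goodSymbol_of_feedbackLaw hExp⟩
  · rintro ⟨𝒪', hO, h0, hsub, u, hmaps, hu, hu0, hcont, huniq, hstab⟩
    exact (goodSymbol_of_feedbackLaw hAsymp hO h0 hsub hmaps hu hu0 hcont huniq hstab).mono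
      fun _ _ _ _ => trivial
  · rintro ⟨𝒪', hO, h0, hsub, u, hmaps, hu, hu0, hcont, huniq, hstab⟩
    exact (goodSymbol_of_feedbackLaw hExp hO h0 hsub hmaps hu hu0 hcont huniq hstab).mono
      fun _ _ _ _ => trivial

/-- For `k ≥ 0`, the system `ẋ = f (x,u)` is locally asymptotically
(resp. exponentially) stabilizable by a `Cᵏ` stationary feedback law iff there is a composition
symbol `h` as in `GoodSymbol`; moreover every stabilizing `Cᵏ` stationary feedback law `u`
equals `proj₂ ∘ h ∘ h₁⁻¹` for some such `h`. -/
theorem statement14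
    {n m : ℕ} (hn : 1 ≤ n) (hm : 1 ≤ m)
    (𝒳 : Set (Vec n)) (𝒰 : Set (Vec m))
    (hXUopen : IsOpen (𝒳 ×ˢ 𝒰)) (hXU0 : ((0 : Vec n), (0 : Vec m)) ∈ 𝒳 ×ˢ 𝒰)
    (f : Vec n × Vec m → Vec n)
    (hfc : ContinuousOn f (𝒳 ×ˢ 𝒰)) (hf0 : f (0, 0) = 0)
    (k : ℕ) :
    (FeedbackStab 𝒳 𝒰 f k LocAsympStable ↔
      GoodSymbol 𝒳 𝒰 f k LocAsympStable fun _ _ _ => True) ∧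
    (FeedbackStab 𝒳 𝒰 f k LocExpStable ↔
      GoodSymbol 𝒳 𝒰 f k LocExpStable fun _ _ _ => True) ∧
    (∀ (𝒪' : Set (Vec n)) (u : Vec n → Vec m),
      IsOpen 𝒪' → (0 : Vec n) ∈ 𝒪' → 𝒪' ⊆ 𝒳 → MapsTo u 𝒪' 𝒰 →
      ContDiffOn ℝ k u 𝒪' → u 0 = 0 →
      ContinuousOn (fun x => f (x, u x)) 𝒪' → UniqCrit 𝒪' (fun x => f (x, u x)) →
      LocAsympStable 𝒪' (fun x => f (x, u x)) →
      GoodSymbol 𝒳 𝒰 f k LocAsympStable fun h φ V =>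
        ∀ x ∈ 𝒪' ∩ V, u x = (h (φ x)).2) ∧
    (∀ (𝒪' : Set (Vec n)) (u : Vec n → Vec m),
      IsOpen 𝒪' → (0 : Vec n) ∈ 𝒪' → 𝒪' ⊆ 𝒳 → MapsTo u 𝒪' 𝒰 →
      ContDiffOn ℝ k u 𝒪' → u 0 = 0 →
      ContinuousOn (fun x => f (x, u x)) 𝒪' → UniqCrit 𝒪' (fun x => f (x, u x)) →
      LocExpStable 𝒪' (fun x => f (x, u x)) →
      GoodSymbol 𝒳 𝒰 f k LocExpStable fun h φ V =>
        ∀ x ∈ 𝒪' ∩ V, u x = (h (φ x)).2) :=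
  statement14_general 𝒳 𝒰 f k
end
end

section
/- Suppose the control system ẋ = f(x,u) is locally exponentially stabilizable by a composition operator with a stationary symbol h : 𝒪 → 𝒳 × 𝒰, and suppose in addition that g := f ∘ h is of class Cˡ for some ℓ ≥ 1 (with the uniqueness criterion holding for g and the origin a locally exponentially stable equilibrium of ẋ = g(x)). Then there exists a connected open neighborhood V ⊆ 𝒪 of 0 such that the restriction of g to V is a Cˡ diffeomorphism onto its image, which is an open subset of ℝⁿ; in particular the Jacobian matrix of g is invertible at every point of V. -/
open Filter Topology Set Function

noncomputable section

/-!
Exponential stability forces the linearization `A = Dg(0)` of `g = f ∘ h` to be injective.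
Otherwise take a small `x₀ ≠ 0` in `ker A` and follow the solution from `x₀`: stability makes it
shrink below `‖x₀‖ / 4` by some time `T` fixed in advance, while near the origin
`g x = A (x - x₀) + o(‖x‖)`, so by Grönwall's inequality it stays within `‖x₀‖ / 4` of `x₀` up to
time `T` once `x₀` is small enough. In finite dimension `A` is then invertible, and the inverse
function theorem on a ball where `Dg` stays invertible yields the `Cˡ` diffeomorphism.
-/

section InverseFunction

variable {𝕂 : Type*} [RCLike 𝕂] {E F : Type*} [NormedAddCommGroup E] [NormedSpace 𝕂 E]
  [CompleteSpace E] [NormedAddCommGroup F] [NormedSpace 𝕂 F]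
  {n : WithTop ℕ∞}

theorem ContDiffOn.isOpen_setOf_fderiv_equiv {f : E → F} {s : Set E} (hf : ContDiffOn 𝕂 n f s)
    (hs : IsOpen s) (hn : 1 ≤ n) :
    IsOpen {x ∈ s | ∃ e : E ≃L[𝕂] F, (e : E →L[𝕂] F) = fderiv 𝕂 f x} :=
  (hf.continuousOn_fderiv_of_isOpen hs hn).isOpen_inter_preimage hs ContinuousLinearEquiv.isOpen

theorem OpenPartialHomeomorph.contDiffOn_symm_image (e : OpenPartialHomeomorph E F) {V : Set E}
    (hV : V ⊆ e.source) (hcd : ∀ x ∈ V, ContDiffAt 𝕂 n e x)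
    (hder : ∀ x ∈ V, ∃ e' : E ≃L[𝕂] F, HasFDerivAt e (e' : E →L[𝕂] F) x) :
    ContDiffOn 𝕂 n e.symm (e '' V) := by
  rintro _ ⟨x, hx, rfl⟩
  obtain ⟨e', he'⟩ := hder x hx
  have hcx := hcd x hx
  rw [← e.left_inv (hV hx)] at he' hcx
  exact (e.contDiffAt_symm (e.map_source (hV hx)) he' hcx).contDiffWithinAt

theorem ContDiffOn.exists_ball_diffeomorph {f : E → F} {s : Set E} {a : E} {f' : E ≃L[𝕂] F}
    (hf : ContDiffOn 𝕂 n f s) (hs : IsOpen s) (hn : 1 ≤ n) (ha : a ∈ s)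
    (hf' : HasFDerivAt f (f' : E →L[𝕂] F) a) :
    ∃ ρ > 0, Metric.ball a ρ ⊆ s ∧ InjOn f (Metric.ball a ρ) ∧ IsOpen (f '' Metric.ball a ρ) ∧
      (∃ φ : F → E, ContDiffOn 𝕂 n φ (f '' Metric.ball a ρ) ∧
        LeftInvOn φ f (Metric.ball a ρ) ∧ RightInvOn φ f (f '' Metric.ball a ρ)) ∧
      ∀ x ∈ Metric.ball a ρ, ∃ e : E ≃L[𝕂] F, HasFDerivAt f (e : E →L[𝕂] F) x := by
  have hn0 : n ≠ 0 := ENat.one_le_iff_ne_zero_withTop.mp hn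
  have hcd : ∀ x ∈ s, ContDiffAt 𝕂 n f x := fun x hx => hf.contDiffAt (hs.mem_nhds hx)
  set F₀ := (hcd a ha).toOpenPartialHomeomorph f hf' hn0
  have hW : IsOpen (F₀.source ∩ {x ∈ s | ∃ e : E ≃L[𝕂] F, (e : E →L[𝕂] F) = fderiv 𝕂 f x}) :=
    F₀.open_source.inter (hf.isOpen_setOf_fderiv_equiv hs hn)
  obtain ⟨ρ, hρ, hball⟩ := Metric.isOpen_iff.mp hW a
    ⟨(hcd a ha).mem_toOpenPartialHomeomorph_source hf' hn0, ha, f', hf'.fderiv.symm⟩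
  have hsrc : Metric.ball a ρ ⊆ F₀.source := fun x hx => (hball hx).1
  have hder : ∀ x ∈ Metric.ball a ρ, ∃ e : E ≃L[𝕂] F, HasFDerivAt f (e : E →L[𝕂] F) x := by
    intro x hx
    obtain ⟨-, hxs, e, he⟩ := hball hx
    exact ⟨e, he ▸ ((hcd x hxs).differentiableAt hn0).hasFDerivAt⟩
  refine ⟨ρ, hρ, fun x hx => (hball hx).2.1, F₀.injOn.mono hsrc,
    F₀.isOpen_image_of_subset_source Metric.isOpen_ball hsrc,
    ⟨F₀.symm, F₀.contDiffOn_symm_image hsrc (fun x hx => hcd x (hball hx).2.1) hder,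
      fun x hx => F₀.left_inv (hsrc hx), ?_⟩, hder⟩
  rintro _ ⟨x, hx, rfl⟩
  exact F₀.right_inv (F₀.map_source (hsrc hx))

end InverseFunction

theorem exists_mul_exp_neg_mul_lt {lam c : ℝ} (M : ℝ) (hlam : 0 < lam) (hc : 0 < c) :
    ∃ T ≥ 0, M * Real.exp (-lam * T) < c := by
  have hdecay : Tendsto (fun t : ℝ => M * Real.exp (-lam * t)) atTop (𝓝 0) := by
    simpa using ((Real.tendsto_exp_atBot.comp
      (tendsto_id.const_mul_atTop_of_neg (neg_neg_of_pos hlam))).const_mul M)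
  obtain ⟨T, hT, hT0⟩ :=
    ((hdecay.eventually (eventually_lt_nhds hc)).and (eventually_ge_atTop 0)).exists
  exact ⟨T, hT0, hT⟩

theorem norm_le_of_norm_sub_clm_le {E F : Type*} [NormedAddCommGroup E] [NormedSpace ℝ E]
    [NormedAddCommGroup F] [NormedSpace ℝ F] {g : E → F} {A : E →L[ℝ] F} {x₀ y : E}
    {ε K R : ℝ} (hA : ‖A‖ ≤ K) (hker : A x₀ = 0) (hy : ‖y‖ ≤ R) (hε : 0 ≤ ε)
    (happrox : ‖g y - A y‖ ≤ ε * ‖y‖) :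
    ‖g y‖ ≤ K * ‖y - x₀‖ + ε * R :=
  calc ‖g y‖ = ‖(g y - A y) + A (y - x₀)‖ := by rw [map_sub, hker, sub_zero, sub_add_cancel]
    _ ≤ ε * ‖y‖ + ‖A‖ * ‖y - x₀‖ := norm_add_le_of_le happrox (A.le_opNorm _)
    _ ≤ ε * R + K * ‖y - x₀‖ := by gcongr
    _ = K * ‖y - x₀‖ + ε * R := add_comm _ _

section Stability

variable {n : ℕ} {𝒪 : Set (Vec n)} {g : Vec n → Vec n}

theorem IsSolOn.norm_sub_le_gronwallBound {x : ℝ → Vec n} {A : Vec n →L[ℝ] Vec n}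
    {ε K R T : ℝ} (hx : IsSolOn 𝒪 g x) (hA : ‖A‖ ≤ K) (hε : 0 ≤ ε)
    (happrox : ∀ y, ‖y‖ ≤ R → ‖g y - A y‖ ≤ ε * ‖y‖) (hker : A (x 0) = 0)
    (hxR : ∀ t, 0 ≤ t → ‖x t‖ ≤ R) (hT : 0 ≤ T) :
    ‖x T - x 0‖ ≤ gronwallBound 0 K (ε * R) T := by
  have hcont : ContinuousOn (fun t => x t - x 0) (Icc 0 T) := fun t ht =>
    ((hx t ht.1).2.sub_const (x 0)).continuousAt.continuousWithinAt
  have hderiv : ∀ t ∈ Ico (0:ℝ) T,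
      HasDerivWithinAt (fun t => x t - x 0) (g (x t)) (Ici t) t := fun t ht =>
    ((hx t ht.1).2.sub_const (x 0)).hasDerivWithinAt
  have hvel : ∀ t ∈ Ico (0:ℝ) T, ‖g (x t)‖ ≤ K * ‖x t - x 0‖ + ε * R := fun t ht =>
    norm_le_of_norm_sub_clm_le hA hker (hxR t ht.1) hε (happrox _ (hxR t ht.1))
  simpa using norm_le_gronwallBound_of_norm_deriv_right_le hcont hderiv (by simp) hvel T
    ⟨hT, le_rfl⟩

theorem HasFDerivAt.exists_isSolOn_drift_le {A : Vec n →L[ℝ] Vec n} (hA : HasFDerivAt g A 0)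
    (hg0 : g 0 = 0) {M T : ℝ} (hM : 0 ≤ M) (hT : 0 ≤ T) :
    ∃ r > 0, ∀ x : ℝ → Vec n, IsSolOn 𝒪 g x → A (x 0) = 0 →
      (∀ t, 0 ≤ t → ‖x t‖ ≤ M * ‖x 0‖) → M * ‖x 0‖ < r → ‖x T - x 0‖ ≤ ‖x 0‖ / 4 := by
  set K := ‖A‖ + 1
  set C := M / K * (Real.exp (K * T) - 1)
  have hC : 0 ≤ C := by
    have : 1 ≤ Real.exp (K * T) := Real.one_le_exp (by positivity)
    have : 0 ≤ M / K := by positivity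
    positivity
  set ε := 1 / (4 * (C + 1))
  have hε : 0 < ε := by positivity
  have hεC : ε * C ≤ 1 / 4 := by
    rw [div_mul_eq_mul_div, div_le_div_iff₀ (by positivity) (by norm_num)]
    linarith
  obtain ⟨r, hr, happrox⟩ := Metric.eventually_nhds_iff.mp
    ((by simpa [hg0] using hA.isLittleO : (fun y => g y - A y) =o[𝓝 0] fun y => y).def hε)
  refine ⟨r, hr, fun x hx hker hxM hMr => ?_⟩
  refine (hx.norm_sub_le_gronwallBound (le_add_of_nonneg_right zero_le_one) hε.le
    (fun y hy => happrox (by rw [dist_zero_right]; linarith)) hker hxM hT).trans ?_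
  calc gronwallBound 0 K (ε * (M * ‖x 0‖)) T = ε * C * ‖x 0‖ := by
        simp only [gronwallBound_of_K_ne_0 (by positivity : K ≠ 0), C]; ring
    _ ≤ 1 / 4 * ‖x 0‖ := by gcongr
    _ = ‖x 0‖ / 4 := by ring

theorem LocExpStable.injective_of_hasFDerivAt {A : Vec n →L[ℝ] Vec n} (hstab : LocExpStable 𝒪 g)
    (hexist : ∃ δ > (0:ℝ), ∀ x₀ : Vec n, ‖x₀‖ < δ → ∃ x, IsSolOn 𝒪 g x ∧ x 0 = x₀)
    (hg0 : g 0 = 0) (hA : HasFDerivAt g A 0) :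
    Injective A := by
  obtain ⟨δ, hδ, M, hM, lam, hlam, hdecay⟩ := hstab
  obtain ⟨δ', hδ', hsol⟩ := hexist
  refine (injective_iff_map_eq_zero A).mpr fun v hAv => by_contra fun hv => ?_
  obtain ⟨T, hT, hMT⟩ := exists_mul_exp_neg_mul_lt M hlam (by norm_num : (0:ℝ) < 1 / 4)
  obtain ⟨r, hr, hdrift⟩ := hA.exists_isSolOn_drift_le (𝒪 := 𝒪) hg0 hM.le hT
  have hsmall : ∀ᶠ s in 𝓝 (0:ℝ), s < δ ∧ s < δ' ∧ M * s < r :=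
    (eventually_lt_nhds hδ).and ((eventually_lt_nhds hδ').and
      (((continuous_const_mul M).tendsto' 0 0 (mul_zero M)).eventually (eventually_lt_nhds hr)))
  obtain ⟨s, hs, hsδ, hsδ', hsr⟩ :=
    (eventually_mem_nhdsWithin.and (nhdsWithin_le_nhds hsmall) : ∀ᶠ s in 𝓝[>] (0:ℝ), _).exists
  have hvpos : 0 < ‖v‖ := norm_pos_iff.mpr hv
  have hx₀ : ‖(s / ‖v‖) • v‖ = s := by
    rw [norm_smul, Real.norm_eq_abs, abs_of_pos (div_pos hs hvpos), div_mul_cancel₀ _ hvpos.ne']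
  obtain ⟨x, hx, hx0⟩ := hsol _ (hx₀ ▸ hsδ')
  have hx0n : ‖x 0‖ = s := hx0 ▸ hx₀
  have hxdecay : ∀ t, 0 ≤ t → ‖x t‖ ≤ M * Real.exp (-lam * t) * ‖x 0‖ :=
    hdecay x hx (hx0n ▸ hsδ)
  have hxbound : ∀ t, 0 ≤ t → ‖x t‖ ≤ M * ‖x 0‖ := fun t ht => by
    have : Real.exp (-lam * t) ≤ 1 := Real.exp_le_one_iff.mpr (by nlinarith)
    nlinarith [hxdecay t ht, mul_le_mul_of_nonneg_left this hM.le, norm_nonneg (x 0)]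
  have hmoved := hdrift x hx (by simp [hx0, hAv]) hxbound (hx0n ▸ hsr)
  have hx0pos : 0 < ‖x 0‖ := hx0n ▸ hs
  have hend : ‖x T‖ < ‖x 0‖ / 4 := by
    nlinarith [hxdecay T hT, mul_lt_mul_of_pos_right hMT hx0pos]
  have htri : ‖x 0‖ ≤ ‖x T‖ + ‖x T - x 0‖ := by simpa using norm_sub_le (x T) (x T - x 0)
  linarith

end Stability

theorem statement16_general
    {n m : ℕ}
    (f : Vec n × Vec m → Vec n)
    (hf0 : f (0, 0) = 0)
    (ℓ : ℕ) (hℓ : 1 ≤ ℓ)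
    (𝒪 : Set (Vec n)) (h𝒪 : IsOpen 𝒪) (h𝒪0 : (0 : Vec n) ∈ 𝒪)
    (h : Vec n → Vec n × Vec m) (hst : h 0 = (0, 0))
    (hfh : ContDiffOn ℝ ℓ (f ∘ h) 𝒪)
    (huniq : UniqCrit 𝒪 (f ∘ h)) (hstab : LocExpStable 𝒪 (f ∘ h)) :
    ∃ V : Set (Vec n), IsOpen V ∧ IsConnected V ∧ (0 : Vec n) ∈ V ∧ V ⊆ 𝒪 ∧
      InjOn (f ∘ h) V ∧ IsOpen ((f ∘ h) '' V) ∧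
      (∃ φ : Vec n → Vec n, ContDiffOn ℝ ℓ φ ((f ∘ h) '' V) ∧
        (∀ x ∈ V, φ ((f ∘ h) x) = x) ∧
        ∀ y ∈ (f ∘ h) '' V, (f ∘ h) (φ y) = y) ∧
      ∀ x ∈ V, Function.Bijective (fderivWithin ℝ (f ∘ h) 𝒪 x) := by
  have hℓ' : (1 : WithTop ℕ∞) ≤ ℓ := by exact_mod_cast hℓ
  have hd0 : HasFDerivAt (f ∘ h) (fderiv ℝ (f ∘ h) 0) 0 :=
    ((hfh.contDiffAt (h𝒪.mem_nhds h𝒪0)).differentiableAt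
      (ENat.one_le_iff_ne_zero_withTop.mp hℓ')).hasFDerivAt
  have hinj : Injective (fderiv ℝ (f ∘ h) 0) :=
    hstab.injective_of_hasFDerivAt
      (huniq.2.imp fun _ hδ => ⟨hδ.1, fun x₀ hx₀ => (hδ.2 x₀ hx₀).1⟩) (by simp [hst, hf0]) hd0
  let e₀ : Vec n ≃L[ℝ] Vec n := (LinearEquiv.ofInjectiveEndo _ hinj).toContinuousLinearEquiv
  obtain ⟨ρ, hρ, hball, hinjV, hopen, hinv, hder⟩ :=
    hfh.exists_ball_diffeomorph h𝒪 hℓ' h𝒪0 (f' := e₀) hd0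
  refine ⟨_, Metric.isOpen_ball, (convex_ball 0 ρ).isConnected ⟨0, Metric.mem_ball_self hρ⟩,
    Metric.mem_ball_self hρ, hball, hinjV, hopen,
    hinv.imp fun φ ⟨hφ, hleft, hright⟩ => ⟨hφ, fun x hx => hleft hx, fun y hy => hright hy⟩,
    fun x hx => ?_⟩
  obtain ⟨e, he⟩ := hder x hx
  rw [fderivWithin_of_isOpen h𝒪 (hball hx), he.fderiv]
  exact e.bijective

/-- If `ẋ = f (x,u)` is locally exponentially stabilized by the composition
operator with stationary symbol `h` and `g := f ∘ h` is of class `Cˡ`, `ℓ ≥ 1`, then `g`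
restricts to a `Cˡ` diffeomorphism of some connected open neighborhood `V ⊆ 𝒪` of `0` onto its
open image; in particular the Jacobian of `g` is invertible at every point of `V`. -/
theorem statement16
    {n m : ℕ} (hn : 1 ≤ n) (hm : 1 ≤ m)
    (𝒳 : Set (Vec n)) (𝒰 : Set (Vec m))
    (hXUopen : IsOpen (𝒳 ×ˢ 𝒰)) (hXU0 : ((0 : Vec n), (0 : Vec m)) ∈ 𝒳 ×ˢ 𝒰)
    (f : Vec n × Vec m → Vec n)
    (hfc : ContinuousOn f (𝒳 ×ˢ 𝒰)) (hf0 : f (0, 0) = 0)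
    (ℓ : ℕ) (hℓ : 1 ≤ ℓ)
    (𝒪 : Set (Vec n)) (h𝒪 : IsOpen 𝒪) (h𝒪0 : (0 : Vec n) ∈ 𝒪)
    (h : Vec n → Vec n × Vec m) (hmap : MapsTo h 𝒪 (𝒳 ×ˢ 𝒰)) (hst : h 0 = (0, 0))
    (hfh : ContDiffOn ℝ ℓ (f ∘ h) 𝒪)
    (huniq : UniqCrit 𝒪 (f ∘ h)) (hstab : LocExpStable 𝒪 (f ∘ h)) :
    ∃ V : Set (Vec n), IsOpen V ∧ IsConnected V ∧ (0 : Vec n) ∈ V ∧ V ⊆ 𝒪 ∧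
      InjOn (f ∘ h) V ∧ IsOpen ((f ∘ h) '' V) ∧
      (∃ φ : Vec n → Vec n, ContDiffOn ℝ ℓ φ ((f ∘ h) '' V) ∧
        (∀ x ∈ V, φ ((f ∘ h) x) = x) ∧
        ∀ y ∈ (f ∘ h) '' V, (f ∘ h) (φ y) = y) ∧
      ∀ x ∈ V, Function.Bijective (fderivWithin ℝ (f ∘ h) 𝒪 x) :=
  statement16_general f hf0 ℓ hℓ 𝒪 h𝒪 h𝒪0 h hst hfh huniq hstab
end
end
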